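/- Let H be a Hopf algebra over a commutative ring R and K a normal Hopf subalgebra with quotient Hopf algebra H̄ = H/K⁺H, where K⁺ = K ∩ ker ε. If K and H̄ are both separable R-algebras, then H is a separable R-algebra. Concretely, if t is a left integral in K with ε(t)=1 and s̄ a left integral in H̄ with ε(s)=1, then st is a left integral in H with ε(st)=1. -/

import Mathlib

universe u v w

open TensorProduct

/-- A left integral: `h * t = ε(h) • t` for all `h`. -/
def IsLeftIntegral (R : Type u) {H : Type v} [CommRing R] [Ring H] [HopfAlgebra R H]
    (t : H) : Prop :=
  ∀ h : H, h * t = Coalgebra.counit (R := R) h • t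

/-- `T` is a separable algebra over the commutative ring `S`. -/
def IsSeparableAlgebra (S : Type u) (T : Type v) [CommRing S] [Ring T] [Algebra S T] : Prop :=
  ∃ e : T ⊗[S] T, LinearMap.mul' S T e = 1 ∧
    ∀ t : T, (t ⊗ₜ[S] (1 : T)) * e = e * ((1 : T) ⊗ₜ[S] t)

/-!
Write `K⁺ = K ∩ ker ε`. For `k ∈ K⁺` one has `k h = Σ h₁ (S(h₂) k h₃)`, and by normality each
`S(h₂) k h₃` lies in `K⁺`, so it is killed by the integral `t`; hence `K⁺H · t = 0`. Since `s` is an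
integral modulo `K⁺H`, this gives `h s t = ε(h) s t`. Finally, a left integral `w` with `ε(w) = 1`
yields the separability idempotent `Σ w₁ ⊗ S(w₂)`.
-/

open Coalgebra HopfAlgebra LinearMap

namespace TensorProduct

variable {R : Type u} {A : Type v} [CommSemiring R] [Semiring A] [Algebra R A]

variable (R) in
noncomputable def outerMul (e : A ⊗[R] A) : A ⊗[R] A →ₗ[R] A ⊗[R] A :=
  mul' R (A ⊗[R] A) ∘ₗ map (mulRight R e ∘ₗ Algebra.TensorProduct.includeLeft.toLinearMap)
    Algebra.TensorProduct.includeRight.toLinearMap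

@[simp]
theorem outerMul_tmul (e : A ⊗[R] A) (u v : A) :
    outerMul R e (u ⊗ₜ v) = (u ⊗ₜ 1) * e * (1 ⊗ₜ v) := by
  simp [outerMul]

end TensorProduct

namespace HopfAlgebra

variable {R : Type u} {H : Type v} [CommSemiring R] [Semiring H] [HopfAlgebra R H]

theorem lTensor_mul'_rTensor_antipode_coassoc (x : H) :
    (mul' R H ∘ₗ (antipode R).rTensor H).lTensor H
      (TensorProduct.assoc R H H H (comul.rTensor H (comul x))) = x ⊗ₜ 1 := by
  rw [coassoc_apply, ← lTensor_comp_apply, comp_assoc, mul_antipode_rTensor_comul,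
    lTensor_comp_apply]
  simp

theorem rTensor_mul'_lTensor_antipode_coassoc (x : H) :
    (mul' R H ∘ₗ (antipode R).lTensor H).rTensor H
      ((TensorProduct.assoc R H H H).symm (comul.lTensor H (comul x))) = 1 ⊗ₜ x := by
  rw [coassoc_symm_apply, ← rTensor_comp_apply, comp_assoc, mul_antipode_lTensor_comul,
    rTensor_comp_apply]
  simp

variable (R) in
/-- The right adjoint action `y ↦ Σ S(y₁) k y₂` of `H` on the element `k`. -/
noncomputable def adjointRight (k : H) : H →ₗ[R] H :=
  mul' R H ∘ₗ map (antipode R) (mulLeft R k) ∘ₗ comul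

theorem counit_adjointRight (k y : H) :
    counit (R := R) (adjointRight R k y) = counit k * counit y := by
  conv_rhs => rw [← sum_counit_smul (ℛ R y)]
  simp [adjointRight, ← (ℛ R y).eq, map_sum, Bialgebra.counit_mul, Finset.mul_sum, mul_left_comm]

theorem mul'_lTensor_adjointRight_comul (k h : H) :
    mul' R H ((adjointRight R k).lTensor H (comul h)) = k * h := by
  have reassoc : mul' R H ∘ₗ (mul' R H ∘ₗ map (antipode R) (mulLeft R k)).lTensor H =
      mul' R H ∘ₗ map id (mulLeft R k) ∘ₗ (mul' R H ∘ₗ (antipode R).lTensor H).rTensor H ∘ₗ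
        (TensorProduct.assoc R H H H).symm.toLinearMap := by
    apply TensorProduct.ext_threefold'
    intro a b c
    simp [mul_assoc]
  calc mul' R H ((adjointRight R k).lTensor H (comul h))
      = (mul' R H ∘ₗ (mul' R H ∘ₗ map (antipode R) (mulLeft R k)).lTensor H)
          (comul.lTensor H (comul h)) := by
        rw [comp_apply, ← lTensor_comp_apply]
        rfl
    _ = k * h := by
        rw [reassoc]
        simp only [comp_apply, LinearEquiv.coe_coe, rTensor_mul'_lTensor_antipode_coassoc]
        simp

theorem mul_mul_eq_zero_of_adjointRight_mem {K : Set H} {t k : H}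
    (ht : ∀ a ∈ K, a * t = counit (R := R) a • t) (hk : ∀ y, adjointRight R k y ∈ K)
    (hk0 : counit (R := R) k = 0) (h : H) : k * h * t = 0 := by
  rw [← mul'_lTensor_adjointRight_comul (R := R) k h, ← (ℛ R h).eq]
  simp [map_sum, Finset.sum_mul, mul_assoc, ht _ (hk _), counit_adjointRight, hk0]

theorem mul_eq_zero_of_mem_span_augmentation_mul {K : Set H} {t x : H}
    (ht : ∀ a ∈ K, a * t = counit (R := R) a • t)
    (hK : ∀ y, ∀ k ∈ K, adjointRight R k y ∈ K)
    (hx : x ∈ Submodule.span R {x : H | ∃ k ∈ K, counit (R := R) k = 0 ∧ ∃ h : H, x = k * h}) :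
    x * t = 0 := by
  induction hx using Submodule.span_induction with
  | mem x hx =>
    obtain ⟨k, hk, hk0, h, rfl⟩ := hx
    exact mul_mul_eq_zero_of_adjointRight_mem ht (fun y => hK y k hk) hk0 h
  | zero => exact zero_mul t
  | add x y _ _ hx hy => rw [add_mul, hx, hy, add_zero]
  | smul r x _ hx => rw [smul_mul_assoc, hx, smul_zero]

theorem lTensor_antipode_comul_mul (a w : H) :
    (antipode R).lTensor H (comul (a * w)) =
      outerMul R ((antipode R).lTensor H (comul w)) ((antipode R).lTensor H (comul a)) := by
  rw [Bialgebra.comul_mul, ← (ℛ R a).eq, ← (ℛ R w).eq]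
  simp [Finset.sum_mul, Finset.mul_sum, map_sum, antipode_mul_antidistrib]
  exact Finset.sum_comm

end HopfAlgebra

namespace IsLeftIntegral

variable {R : Type u} {H : Type v} [CommRing R] [Ring H] [HopfAlgebra R H]

theorem tmul_one_mul_eq {w : H} (hw : IsLeftIntegral R w) (x : H) :
    (x ⊗ₜ[R] (1 : H)) * (antipode R).lTensor H (comul w) =
      (antipode R).lTensor H (comul w) * ((1 : H) ⊗ₜ[R] x) := by
  set e := (antipode R).lTensor H (comul (R := R) w)
  -- Both sides equal `Σ (x₁ w)₁ ⊗ S((x₁ w)₂) x₂`: the left one by coassociativity, the right one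
  -- because `x₁ w = ε(x₁) w`.
  have reassoc : outerMul R e ∘ₗ (mul' R H ∘ₗ (antipode R).rTensor H).lTensor H ∘ₗ
      (TensorProduct.assoc R H H H).toLinearMap =
      mul' R (H ⊗[R] H) ∘ₗ map (outerMul R e ∘ₗ (antipode R).lTensor H)
        Algebra.TensorProduct.includeRight.toLinearMap := by
    apply TensorProduct.ext_threefold
    intro a b c
    simp [mul_assoc]
  have absorb : outerMul R e ∘ₗ (antipode R).lTensor H ∘ₗ comul = smulRight counit e := by
    ext a
    simp [← lTensor_antipode_comul_mul, hw a, e]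
  calc (x ⊗ₜ[R] (1 : H)) * e
      = outerMul R e ((mul' R H ∘ₗ (antipode R).rTensor H).lTensor H
          (TensorProduct.assoc R H H H (comul.rTensor H (comul x)))) := by
        rw [lTensor_mul'_rTensor_antipode_coassoc]
        simp [← Algebra.TensorProduct.one_def]
    _ = mul' R (H ⊗[R] H)
          (map (smulRight counit e) Algebra.TensorProduct.includeRight.toLinearMap (comul x)) := by
        rw [← absorb]
        simpa [comp_assoc] using congr($reassoc (comul.rTensor H (comul x)))
    _ = e * (1 ⊗ₜ[R] x) := by
        conv_rhs => rw [← sum_counit_smul (ℛ R x)]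
        rw [← (ℛ R x).eq]
        simp [map_sum, TensorProduct.tmul_sum, Finset.mul_sum, TensorProduct.tmul_smul]

theorem isSeparableAlgebra {w : H} (hw : IsLeftIntegral R w) (hε : counit (R := R) w = 1) :
    IsSeparableAlgebra R H :=
  ⟨(antipode R).lTensor H (comul w), by simp [hε], hw.tmul_one_mul_eq⟩

end IsLeftIntegral

theorem isLeftIntegral_mul_of_normal {R : Type u} {H : Type v} [CommRing R] [Ring H]
    [HopfAlgebra R H] {K : Set H} {s t : H}
    (ht : ∀ a ∈ K, a * t = counit (R := R) a • t)
    (hK : ∀ y, ∀ k ∈ K, adjointRight R k y ∈ K)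
    (hs : ∀ h : H, h * s - counit (R := R) h • s ∈
      Submodule.span R {x : H | ∃ k ∈ K, counit (R := R) k = 0 ∧ ∃ h' : H, x = k * h'}) :
    IsLeftIntegral R (s * t) := by
  intro h
  have h_kill := mul_eq_zero_of_mem_span_augmentation_mul ht hK (hs h)
  rwa [sub_mul, sub_eq_zero, smul_mul_assoc, mul_assoc] at h_kill

theorem separable_of_normal_hopf_subalgebra_and_quotient (R : Type u) (H : Type v)
    [CommRing R] [Ring H] [HopfAlgebra R H] (K : Subalgebra R H)
    -- normality: `Σ h₁ k S(h₂) ∈ K` and `Σ S(h₁) k h₂ ∈ K`: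
    (hnormR : ∀ (h : H), ∀ k ∈ K, LinearMap.mul' R H
      ((TensorProduct.map (HopfAlgebra.antipode (R := R)) (LinearMap.mulLeft R k))
        (Coalgebra.comul h)) ∈ K)
    -- `t` is a left integral of `K` with `ε(t) = 1`:
    (t : H) (ht : ∀ k ∈ K, k * t = Coalgebra.counit (R := R) k • t)
    (htε : Coalgebra.counit (R := R) t = 1)
    -- `s` maps to a left integral of `H̄ = H/K⁺H` and `ε(s) = 1`:
    (s : H)
    (hs : ∀ h : H, h * s - Coalgebra.counit (R := R) h • s ∈
      Submodule.span R {x : H | ∃ k ∈ K, Coalgebra.counit (R := R) k = 0 ∧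
        ∃ h' : H, x = k * h'})
    (hsε : Coalgebra.counit (R := R) s = 1) :
    IsLeftIntegral R (s * t) ∧ Coalgebra.counit (R := R) (s * t) = 1 ∧
      IsSeparableAlgebra R H := by
  have hint : IsLeftIntegral R (s * t) := isLeftIntegral_mul_of_normal ht hnormR hs
  have hε : Coalgebra.counit (R := R) (s * t) = 1 := by
    rw [Bialgebra.counit_mul, hsε, htε, one_mul]
  exact ⟨hint, hε, hint.isSeparableAlgebra hε⟩
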